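/- Guessing probability of an XY-plane observable from the purifying system: let |Ψ⟩_ABC be a tripartite pure state whose reduced state on AB is ρ_AB = |0⟩⟨0| ⊗ σ₀ + |1⟩⟨1| ⊗ σ₁ with Tr σ₀ + Tr σ₁ = 1. If W is the outcome of a projective measurement on qubit A in a basis {(|0⟩ ± e^{iθ}|1⟩)/√2}, then 2 p_guess(W|C) − 1 = 2‖√σ₀ √σ₁‖₁, independently of θ. -/

import Mathlib

/-!
Let `V₀, V₁` be the amplitude matrices `C × B` of the two branches of `ψ` over the basis of `A`, so
that `Vᵢᴴ Vₖ` are the blocks of `ρ_AB`: `V₀ᴴ V₀ = σ₀`, `V₁ᴴ V₁ = σ₁`, `V₁ᴴ V₀ = 0`. Up to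
transposition, `τ₊ - τ₋ = e^{-iθ} X + e^{iθ} Xᴴ` with `X = V₀ V₁ᴴ`, and `X² = 0`. Hence
`(τ₊ - τ₋)ᴴ (τ₊ - τ₋) = Xᴴ X + X Xᴴ` is a sum of positive semidefinite matrices with orthogonal
supports, its square root splits, and since `Xᴴ X` and `X Xᴴ` have the same nonzero spectrum,
`‖τ₊ - τ₋‖₁ = 2 ‖X‖₁`, whatever `θ`. The same spectral argument, applied twice while moving square
roots of Gram matrices across, shows that `‖V₀ V₁ᴴ‖₁ = ‖√(V₀ᴴ V₀) √(V₁ᴴ V₁)‖₁ = ‖√σ₀ √σ₁‖₁`.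
-/

open ComplexOrder

/-- The square root of a positive semidefinite matrix, as defined in the older Mathlib
(`Matrix.PosSemidef.sqrt`, removed since). -/
noncomputable def Matrix.PosSemidef.sqrt {n : Type*} [Fintype n] [DecidableEq n] {𝕜 : Type*}
    [RCLike 𝕜] {A : Matrix n n 𝕜} (hA : A.PosSemidef) : Matrix n n 𝕜 :=
  hA.1.eigenvectorUnitary.1 * Matrix.diagonal ((↑) ∘ (√·) ∘ hA.1.eigenvalues) *
    (star hA.1.eigenvectorUnitary : Matrix n n 𝕜)

/-- Trace norm ‖A‖₁ = Tr √(AᴴA). -/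
noncomputable def traceNorm {n : Type*} [Fintype n] [DecidableEq n]
    (A : Matrix n n ℂ) : ℝ :=
  ((Matrix.posSemidef_conjTranspose_mul_self A).sqrt.trace).re

/-- The XY-plane measurement vector (|0⟩ + s·e^{iθ}|1⟩)/√2 on qubit A, s = ±1. -/
noncomputable def wvec (θ : ℝ) (s : ℝ) : Fin 2 → ℂ :=
  ![1 / Real.sqrt 2, s * Complex.exp (Complex.I * θ) / Real.sqrt 2]

/-- Subnormalized conditional state of C given the outcome w of an XY-plane
measurement on qubit A of the tripartite pure state ψ (B is traced out). -/
noncomputable def condC {b c : Type*} [Fintype b] [Fintype c]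
    (ψ : Fin 2 → b → c → ℂ) (w : Fin 2 → ℂ) : Matrix c c ℂ :=
  Matrix.of fun m m' =>
    ∑ j : b, (∑ i, star (w i) * ψ i j m) * star (∑ i, star (w i) * ψ i j m')

namespace Matrix

open scoped MatrixOrder
open Polynomial

variable {n m : Type*} [Fintype n] [DecidableEq n] [Fintype m] [DecidableEq m]
  {𝕜 : Type*} [RCLike 𝕜]

lemma PosSemidef.sqrt_eq_cfcSqrt {A : Matrix n n 𝕜} (hA : A.PosSemidef) :
    hA.sqrt = CFC.sqrt A := by
  rw [CFC.sqrt_eq_real_sqrt A hA.nonneg, cfcₙ_eq_cfc, hA.1.cfc_eq]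
  rfl

lemma trace_cfcSqrt_eq_sum_roots_charpoly {A : Matrix n n 𝕜} (hA : A.PosSemidef) :
    (CFC.sqrt A).trace = (A.charpoly.roots.map fun x => (√(RCLike.re x) : 𝕜)).sum := by
  rw [← hA.sqrt_eq_cfcSqrt, PosSemidef.sqrt, trace_mul_cycle,
    mem_unitaryGroup_iff'.mp hA.1.eigenvectorUnitary.2, one_mul, trace_diagonal,
    hA.1.roots_charpoly_eq_eigenvalues, Multiset.map_map, ← Finset.sum_eq_multiset_sum]
  simp

lemma trace_cfcSqrt_transpose {A : Matrix n n 𝕜} (hA : A.PosSemidef) :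
    (CFC.sqrt Aᵀ).trace = (CFC.sqrt A).trace := by
  rw [trace_cfcSqrt_eq_sum_roots_charpoly hA.transpose, trace_cfcSqrt_eq_sum_roots_charpoly hA,
    charpoly_transpose]

lemma trace_cfcSqrt_conjTranspose_mul_self (N : Matrix m n 𝕜) :
    (CFC.sqrt (Nᴴ * N)).trace = (CFC.sqrt (N * Nᴴ)).trace := by
  have hroots := congrArg roots (charpoly_mul_comm' N Nᴴ)
  rw [roots_mul (mul_ne_zero (pow_ne_zero _ X_ne_zero) (charpoly_monic _).ne_zero),
    roots_mul (mul_ne_zero (pow_ne_zero _ X_ne_zero) (charpoly_monic _).ne_zero),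
    roots_pow, roots_pow, roots_X] at hroots
  have := congrArg (fun s => (s.map fun x => (√(RCLike.re x) : 𝕜)).sum) hroots
  simp only [Multiset.map_add, Multiset.sum_add, Multiset.map_nsmul, Multiset.sum_nsmul,
    Multiset.map_singleton, Multiset.sum_singleton, map_zero, Real.sqrt_zero,
    smul_zero, zero_add] at this
  rw [trace_cfcSqrt_eq_sum_roots_charpoly (posSemidef_conjTranspose_mul_self N),
    trace_cfcSqrt_eq_sum_roots_charpoly (posSemidef_self_mul_conjTranspose N), this]

lemma cfcSqrt_mul_cfcSqrt_eq_zero {A B : Matrix n n 𝕜} (hA : A.PosSemidef) (hB : B.PosSemidef)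
    (hAB : A * B = 0) : CFC.sqrt A * CFC.sqrt B = 0 := by
  set C := CFC.sqrt A * CFC.sqrt B
  have hCC : Cᴴ * C = CFC.sqrt B * A * CFC.sqrt B := by
    rw [conjTranspose_mul, (nonneg_iff_posSemidef.mp (CFC.sqrt_nonneg A)).1.eq,
      (nonneg_iff_posSemidef.mp (CFC.sqrt_nonneg B)).1.eq, mul_assoc, ← mul_assoc (CFC.sqrt A),
      CFC.sqrt_mul_sqrt_self A hA.nonneg, mul_assoc]
  have hsq : (Cᴴ * C) ^ 2 = 0 := by
    rw [hCC, sq]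
    simp only [mul_assoc]
    rw [← mul_assoc (CFC.sqrt B) (CFC.sqrt B), CFC.sqrt_mul_sqrt_self B hB.nonneg,
      ← mul_assoc A B, hAB]
    simp
  rw [← conjTranspose_mul_self_eq_zero, ← CFC.sqrt_sq (Cᴴ * C)
    (posSemidef_conjTranspose_mul_self C).nonneg, hsq, CFC.sqrt_zero]

lemma cfcSqrt_add_of_mul_eq_zero {A B : Matrix n n 𝕜} (hA : A.PosSemidef) (hB : B.PosSemidef)
    (hAB : A * B = 0) : CFC.sqrt (A + B) = CFC.sqrt A + CFC.sqrt B := by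
  have hBA : B * A = 0 := by
    simpa [hA.1.eq, hB.1.eq] using congrArg conjTranspose hAB
  rw [CFC.sqrt_eq_iff _ _ (hA.add hB).nonneg (add_nonneg (CFC.sqrt_nonneg A) (CFC.sqrt_nonneg B)),
    add_mul, mul_add, mul_add, cfcSqrt_mul_cfcSqrt_eq_zero hA hB hAB,
    cfcSqrt_mul_cfcSqrt_eq_zero hB hA hBA, CFC.sqrt_mul_sqrt_self A hA.nonneg,
    CFC.sqrt_mul_sqrt_self B hB.nonneg, add_zero, zero_add]

end Matrix

section TraceNorm

open Matrix
open scoped MatrixOrder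

variable {n m : Type*} [Fintype n] [DecidableEq n] [Fintype m] [DecidableEq m]

lemma traceNorm_eq_re_trace_cfcSqrt (A : Matrix n n ℂ) :
    traceNorm A = (CFC.sqrt (Aᴴ * A)).trace.re := by
  rw [traceNorm, PosSemidef.sqrt_eq_cfcSqrt]

lemma traceNorm_transpose (A : Matrix n n ℂ) : traceNorm Aᵀ = traceNorm A := by
  have h : (Aᵀ)ᴴ * Aᵀ = (A * Aᴴ)ᵀ := by
    rw [transpose_mul, conjTranspose_transpose_eq_transpose_conjTranspose]
  rw [traceNorm_eq_re_trace_cfcSqrt, traceNorm_eq_re_trace_cfcSqrt, h,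
    trace_cfcSqrt_transpose (posSemidef_self_mul_conjTranspose A),
    trace_cfcSqrt_conjTranspose_mul_self]

lemma traceNorm_smul_add_star_smul_conjTranspose {X : Matrix n n ℂ} (hX : X * X = 0) {a : ℂ}
    (ha : star a * a = 1) : traceNorm (star a • X + a • Xᴴ) = 2 * traceNorm X := by
  have hXX : Xᴴ * Xᴴ = 0 := by rw [← conjTranspose_mul, hX, conjTranspose_zero]
  have hsq : (star a • X + a • Xᴴ)ᴴ * (star a • X + a • Xᴴ) = Xᴴ * X + X * Xᴴ := by
    simp only [conjTranspose_add, conjTranspose_smul, conjTranspose_conjTranspose, star_star,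
      add_mul, mul_add, smul_mul_smul, hX, hXX, smul_zero, add_zero, zero_add]
    rw [mul_comm a, ha, one_smul, one_smul]
  have horth : Xᴴ * X * (X * Xᴴ) = 0 := by
    rw [mul_assoc, ← mul_assoc X, hX, zero_mul, mul_zero]
  rw [traceNorm_eq_re_trace_cfcSqrt, traceNorm_eq_re_trace_cfcSqrt, hsq,
    cfcSqrt_add_of_mul_eq_zero (posSemidef_conjTranspose_mul_self X)
      (posSemidef_self_mul_conjTranspose X) horth,
    trace_add, ← trace_cfcSqrt_conjTranspose_mul_self, Complex.add_re, two_mul]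

lemma traceNorm_mul_conjTranspose (P Q : Matrix m n ℂ) :
    traceNorm (P * Qᴴ) = traceNorm (CFC.sqrt (Pᴴ * P) * CFC.sqrt (Qᴴ * Q)) := by
  set R := CFC.sqrt (Pᴴ * P)
  set T := CFC.sqrt (Qᴴ * Q)
  have hR : Rᴴ = R := (nonneg_iff_posSemidef.mp (CFC.sqrt_nonneg _)).1.eq
  have hT : Tᴴ = T := (nonneg_iff_posSemidef.mp (CFC.sqrt_nonneg _)).1.eq
  have hRR : R * R = Pᴴ * P := CFC.sqrt_mul_sqrt_self _ (posSemidef_conjTranspose_mul_self P).nonneg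
  have hTT : T * T = Qᴴ * Q := CFC.sqrt_mul_sqrt_self _ (posSemidef_conjTranspose_mul_self Q).nonneg
  have h₁ : (P * Qᴴ)ᴴ * (P * Qᴴ) = (Q * R) * (Q * R)ᴴ := by
    simp only [conjTranspose_mul, conjTranspose_conjTranspose, hR, Matrix.mul_assoc]
    rw [← Matrix.mul_assoc R, hRR, Matrix.mul_assoc]
  have h₂ : (Q * R)ᴴ * (Q * R) = (R * T) * (R * T)ᴴ := by
    simp only [conjTranspose_mul, hR, hT, Matrix.mul_assoc]
    rw [← Matrix.mul_assoc T, hTT, Matrix.mul_assoc]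
  rw [traceNorm_eq_re_trace_cfcSqrt, traceNorm_eq_re_trace_cfcSqrt, h₁,
    ← trace_cfcSqrt_conjTranspose_mul_self, h₂, ← trace_cfcSqrt_conjTranspose_mul_self]

end TraceNorm

section Purification

open Matrix ComplexConjugate

variable {b c : Type*} [Fintype c]

/-- The branch `A = i` of `ψ` as a matrix `C × B`, conjugated so that
`(branchAmplitude ψ i)ᴴ * branchAmplitude ψ k` is the `(i, k)` block of `ρ_AB`. -/
def branchAmplitude (ψ : Fin 2 → b → c → ℂ) (i : Fin 2) : Matrix c b ℂ :=
  Matrix.of fun m j => star (ψ i j m)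

lemma conjTranspose_branchAmplitude_mul (ψ : Fin 2 → b → c → ℂ) (i k : Fin 2) :
    (branchAmplitude ψ i)ᴴ * branchAmplitude ψ k =
      Matrix.of fun j l => ∑ m, ψ i j m * star (ψ k l m) := by
  ext j l
  simp [branchAmplitude, mul_apply]

lemma condC_wvec_sub_condC_wvec [Fintype b] (ψ : Fin 2 → b → c → ℂ) (θ : ℝ) :
    condC ψ (wvec θ 1) - condC ψ (wvec θ (-1)) =
      (star (Complex.exp (Complex.I * θ)) • (branchAmplitude ψ 0 * (branchAmplitude ψ 1)ᴴ) +
        Complex.exp (Complex.I * θ) • (branchAmplitude ψ 0 * (branchAmplitude ψ 1)ᴴ)ᴴ)ᵀ := by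
  ext m m'
  simp only [condC, wvec, one_div, Complex.ofReal_one, one_mul, RCLike.star_def, Fin.sum_univ_two,
    Fin.isValue, cons_val_zero, map_inv₀, Complex.conj_ofReal, cons_val_one, cons_val_fin_one,
    map_div₀, star_add, star_mul', star_inv₀, star_div₀, RingHomCompTriple.comp_apply,
    RingHom.id_apply, Complex.ofReal_neg, neg_mul, map_neg, star_neg, Matrix.sub_apply, of_apply,
    ← Finset.sum_sub_distrib, branchAmplitude, conjTranspose_mul, conjTranspose_conjTranspose,
    transpose_apply, Matrix.add_apply, Matrix.smul_apply, mul_apply, conjTranspose_apply,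
    smul_eq_mul, Finset.mul_sum, ← Finset.sum_add_distrib]
  refine Finset.sum_congr rfl fun j _ => ?_
  have hs : ((√2 : ℝ) : ℂ)⁻¹ ^ 2 = 1 / 2 := by
    rw [inv_pow, ← Complex.ofReal_pow, Real.sq_sqrt zero_le_two]
    norm_num
  linear_combination 2 * (Complex.exp (Complex.I * θ) * ψ 0 j m * conj (ψ 1 j m') +
    conj (Complex.exp (Complex.I * θ)) * ψ 1 j m * conj (ψ 0 j m')) * hs

end Purification

open Matrix in
theorem guess_xy_from_purifier_general
    {b c : Type*} [Fintype b] [DecidableEq b] [Fintype c] [DecidableEq c]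
    (ψ : Fin 2 → b → c → ℂ) (σ₀ σ₁ : Matrix b b ℂ)
    (h₀ : σ₀.PosSemidef) (h₁ : σ₁.PosSemidef)
    (hred : ∀ (i k : Fin 2) (j l : b),
      (∑ m : c, ψ i j m * star (ψ k l m)) =
        if i = 0 ∧ k = 0 then σ₀ j l else if i = 1 ∧ k = 1 then σ₁ j l else 0)
    (θ : ℝ) :
    traceNorm (condC ψ (wvec θ 1) - condC ψ (wvec θ (-1)))
      = 2 * traceNorm (h₀.sqrt * h₁.sqrt) := by
  rw [condC_wvec_sub_condC_wvec, traceNorm_transpose]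
  set V := branchAmplitude ψ
  have h₀₀ : (V 0)ᴴ * V 0 = σ₀ := by
    ext j l; simpa [V, conjTranspose_branchAmplitude_mul] using hred 0 0 j l
  have h₁₁ : (V 1)ᴴ * V 1 = σ₁ := by
    ext j l; simpa [V, conjTranspose_branchAmplitude_mul] using hred 1 1 j l
  have h₁₀ : (V 1)ᴴ * V 0 = 0 := by
    ext j l; simpa [V, conjTranspose_branchAmplitude_mul] using hred 1 0 j l
  have hXX : V 0 * (V 1)ᴴ * (V 0 * (V 1)ᴴ) = 0 := by
    rw [Matrix.mul_assoc, ← Matrix.mul_assoc (V 1)ᴴ, h₁₀, Matrix.zero_mul, Matrix.mul_zero]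
  have hz : star (Complex.exp (Complex.I * θ)) * Complex.exp (Complex.I * θ) = 1 := by
    rw [Complex.star_def, ← Complex.exp_conj, ← Complex.exp_add]
    simp
  rw [traceNorm_smul_add_star_smul_conjTranspose hXX hz, traceNorm_mul_conjTranspose, h₀₀, h₁₁,
    h₀.sqrt_eq_cfcSqrt, h₁.sqrt_eq_cfcSqrt]

/-- Guessing an XY-plane observable from the purifier: if the reduced state of
ψ on AB is |0⟩⟨0|⊗σ₀ + |1⟩⟨1|⊗σ₁, then 2·p_guess(W|C) − 1 = ‖τ₊ − τ₋‖₁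
= 2‖√σ₀√σ₁‖₁, independently of θ. -/
theorem guess_xy_from_purifier
    {b c : Type*} [Fintype b] [DecidableEq b] [Fintype c] [DecidableEq c]
    (ψ : Fin 2 → b → c → ℂ) (σ₀ σ₁ : Matrix b b ℂ)
    (h₀ : σ₀.PosSemidef) (h₁ : σ₁.PosSemidef)
    (htr : σ₀.trace + σ₁.trace = 1)
    (hred : ∀ (i k : Fin 2) (j l : b),
      (∑ m : c, ψ i j m * star (ψ k l m)) =
        if i = 0 ∧ k = 0 then σ₀ j l else if i = 1 ∧ k = 1 then σ₁ j l else 0)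
    (θ : ℝ) :
    traceNorm (condC ψ (wvec θ 1) - condC ψ (wvec θ (-1)))
      = 2 * traceNorm (h₀.sqrt * h₁.sqrt) :=
  guess_xy_from_purifier_general ψ σ₀ σ₁ h₀ h₁ hred θ
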